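/- Let (I,J,K) be a hypercomplex structure on E and let ∇ be defined by ∇_U V = −(1/2)·K(JV∘IU − J(V∘IU) − I(JV∘U) + JI(V∘U)), extended ℂ-bilinearly to E_ℂ. Then for all X, Y ∈ L_J and ξ, η ∈ L*_J: ∇_X ξ ∈ L*_J with ⟨∇_X ξ, Y⟩ = ρ(X)⟨ξ,Y⟩ − ρ(Y)⟨ξ,X⟩ − ⟨ξ, X∘Y⟩, and ∇_ξ X ∈ L_J with ⟨∇_ξ X, η⟩ = ρ(ξ)⟨X,η⟩ − ρ(η)⟨X,ξ⟩ − ⟨X, ξ∘η⟩. -/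

import Mathlib

open scoped TensorProduct
section BC

variable {M N P : Type} [AddCommGroup M] [Module ℝ M] [AddCommGroup N] [Module ℝ N]
  [AddCommGroup P] [Module ℝ P]

/-- Complex-bilinear extension of an `ℝ`-bilinear map to the complexifications. -/
noncomputable def bcBilin (B : M →ₗ[ℝ] N →ₗ[ℝ] P) :
    ℂ ⊗[ℝ] M →ₗ[ℂ] ℂ ⊗[ℝ] N →ₗ[ℂ] ℂ ⊗[ℝ] P :=
  LinearMap.liftBaseChange ℂ ((LinearMap.baseChangeHom ℝ ℂ N P) ∘ₗ B)

/-- Complex conjugation on the complexification `ℂ ⊗[ℝ] M`. -/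
noncomputable def conjT (M : Type) [AddCommGroup M] [Module ℝ M] :
    ℂ ⊗[ℝ] M →ₗ[ℝ] ℂ ⊗[ℝ] M :=
  TensorProduct.map Complex.conjAe.toLinearMap LinearMap.id

/-- The `i`-eigenspace of a `ℂ`-linear endomorphism of `ℂ ⊗[ℝ] M`. -/
def eigP (Jc : ℂ ⊗[ℝ] M →ₗ[ℂ] ℂ ⊗[ℝ] M) : Set (ℂ ⊗[ℝ] M) :=
  {e | Jc e = Complex.I • e}

/-- The `-i`-eigenspace of a `ℂ`-linear endomorphism of `ℂ ⊗[ℝ] M`. -/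
def eigM (Jc : ℂ ⊗[ℝ] M →ₗ[ℂ] ℂ ⊗[ℝ] M) : Set (ℂ ⊗[ℝ] M) :=
  {e | Jc e = -(Complex.I • e)}

end BC

/-- An (algebraic) Courant algebroid: a commutative `ℝ`-algebra `A`, an `A`-module `E`,
a nondegenerate symmetric `A`-bilinear pairing, an anchor with values in `ℝ`-linear
derivations of `A`, a map `Dm : A → E`, and an `ℝ`-bilinear Dorfman bracket. -/
structure CourantAlgebroid (A E : Type) [CommRing A] [Algebra ℝ A]
    [AddCommGroup E] [Module ℝ E] [Module A E] [IsScalarTower ℝ A E] : Type where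
  pair : E →ₗ[A] E →ₗ[A] A
  pair_symm : ∀ x y, pair x y = pair y x
  pair_nondeg : ∀ x, (∀ y, pair x y = 0) → x = 0
  anchor : E →ₗ[A] Derivation ℝ A A
  Dm : A →ₗ[ℝ] E
  pair_Dm : ∀ (f : A) (x : E), pair (Dm f) x = (1/2 : ℝ) • anchor x f
  brac : E →ₗ[ℝ] E →ₗ[ℝ] E
  brac_leibniz : ∀ x y z, brac x (brac y z) = brac (brac x y) z + brac y (brac x z)
  anchor_brac : ∀ (x y : E) (f : A),
    anchor (brac x y) f = anchor x (anchor y f) - anchor y (anchor x f)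
  brac_smul : ∀ (f : A) (x y : E), brac x (f • y) = anchor x f • y + f • brac x y
  brac_add_swap : ∀ x y, brac x y + brac y x = (2 : ℝ) • Dm (pair x y)
  Dm_brac : ∀ (f : A) (x : E), brac (Dm f) x = 0
  anchor_pair : ∀ x y z, anchor x (pair y z) = pair (brac x y) z + pair y (brac x z)

namespace CourantAlgebroid

variable {A E : Type} [CommRing A] [Algebra ℝ A]
    [AddCommGroup E] [Module ℝ E] [Module A E] [IsScalarTower ℝ A E]

/-- The Nijenhuis concomitant of two operators with respect to a bracket. -/
def nijGen {M : Type*} [AddCommGroup M] (br : M → M → M) (F G : M → M) (U V : M) : M :=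
  br (F U) (G V) - F (br U (G V)) - G (br (F U) V) + F (G (br U V))
    + br (G U) (F V) - G (br U (F V)) - F (br (G U) V) + G (F (br U V))

/-- The Nijenhuis concomitant `N(F,G)` of two `A`-linear endomorphisms of `E`. -/
def nij (C : CourantAlgebroid A E) (F G : E →ₗ[A] E) (U V : E) : E :=
  nijGen (fun x y => C.brac x y) (fun e => F e) (fun e => G e) U V

/-- An almost complex structure: an orthogonal endomorphism squaring to `-1`. -/
def IsAlmostComplexStr (C : CourantAlgebroid A E) (J : E →ₗ[A] E) : Prop :=
  (∀ e, J (J e) = -e) ∧ ∀ x y, C.pair (J x) (J y) = C.pair x y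

/-- A complex structure: an almost complex structure with vanishing Nijenhuis concomitant. -/
def IsComplexStr (C : CourantAlgebroid A E) (J : E →ₗ[A] E) : Prop :=
  C.IsAlmostComplexStr J ∧ ∀ U V, C.nij J J U V = 0

/-- An almost hypercomplex structure: a triple of almost complex structures
satisfying the quaternionic relations. -/
def IsAlmostHypercomplex (C : CourantAlgebroid A E) (I J K : E →ₗ[A] E) : Prop :=
  C.IsAlmostComplexStr I ∧ C.IsAlmostComplexStr J ∧ C.IsAlmostComplexStr K ∧
    ∀ e, I (J (K e)) = -e

/-- A hypercomplex structure: an almost hypercomplex structure all of whose six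
Nijenhuis concomitants vanish. -/
def IsHypercomplex (C : CourantAlgebroid A E) (I J K : E →ₗ[A] E) : Prop :=
  C.IsAlmostHypercomplex I J K ∧
    (∀ U V, C.nij I I U V = 0) ∧ (∀ U V, C.nij I J U V = 0) ∧ (∀ U V, C.nij I K U V = 0) ∧
    (∀ U V, C.nij J J U V = 0) ∧ (∀ U V, C.nij J K U V = 0) ∧ (∀ U V, C.nij K K U V = 0)

/-- The Poisson-type bracket on `A` induced by a skew-symmetric endomorphism `F`. -/
def pb (C : CourantAlgebroid A E) (F : E →ₗ[A] E) (f g : A) : A :=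
  C.pair (F (C.Dm f)) (C.Dm g)

/-- `Δ_f(U,V)` associated with an almost hypercomplex triple. -/
def Delta (C : CourantAlgebroid A E) (I J K : E →ₗ[A] E) (f : A) (U V : E) : E :=
  C.pair U V • C.Dm f + C.pair (I U) V • I (C.Dm f) + C.pair (J U) V • J (C.Dm f)
    + C.pair (K U) V • K (C.Dm f)

/-- A hypercomplex connection relative to an almost hypercomplex triple. -/
def IsHConn (C : CourantAlgebroid A E) (I J K : E →ₗ[A] E)
    (conn : E →ₗ[ℝ] E →ₗ[ℝ] E) : Prop :=
  (∀ (f : A) (U V : E), conn (f • U) V = f • conn U V) ∧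
  (∀ (f : A) (U V : E),
    conn U (f • V) = C.anchor U f • V + f • conn U V - C.Delta I J K f U V)

/-- The torsion of an `ℝ`-bilinear connection. -/
noncomputable def torsion (C : CourantAlgebroid A E) (conn : E →ₗ[ℝ] E →ₗ[ℝ] E) (U V : E) : E :=
  conn U V - conn V U - (1/2 : ℝ) • (C.brac U V - C.brac V U)

/-- The canonical hypercomplex connection. -/
noncomputable def hconn (C : CourantAlgebroid A E) (I J K : E →ₗ[A] E) (U V : E) : E :=
  -((1/2 : ℝ) • K (C.brac (J V) (I U) - J (C.brac V (I U)) - I (C.brac (J V) U)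
      + J (I (C.brac V U))))

/-- The pairing as an `ℝ`-bilinear map. -/
noncomputable def pairR (C : CourantAlgebroid A E) : E →ₗ[ℝ] E →ₗ[ℝ] A :=
  LinearMap.mk₂ ℝ (fun x y => C.pair x y)
    (fun x x' y => by simp)
    (fun r x y => by
      show C.pair (r • x) y = r • C.pair x y
      rw [← algebraMap_smul A r x, map_smul, LinearMap.smul_apply, algebraMap_smul])
    (fun x y y' => by simp)
    (fun r x y => by
      show C.pair x (r • y) = r • C.pair x y
      rw [← algebraMap_smul A r y, map_smul, algebraMap_smul])

/-- The anchor as an `ℝ`-bilinear map `E → A → A`. -/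
noncomputable def rhoR (C : CourantAlgebroid A E) : E →ₗ[ℝ] A →ₗ[ℝ] A :=
  LinearMap.mk₂ ℝ (fun x f => C.anchor x f)
    (fun x x' f => by simp)
    (fun r x f => by
      show C.anchor (r • x) f = r • C.anchor x f
      rw [← algebraMap_smul A r x, map_smul, Derivation.smul_apply, algebraMap_smul])
    (fun x f f' => by simp)
    (fun r x f => by simp)

/-- The `A`-module structure on `E` as an `ℝ`-bilinear map. -/
noncomputable def smulR (A E : Type) [CommRing A] [Algebra ℝ A]
    [AddCommGroup E] [Module ℝ E] [Module A E] [IsScalarTower ℝ A E] :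
    A →ₗ[ℝ] E →ₗ[ℝ] E :=
  LinearMap.mk₂ ℝ (fun a e => a • e)
    (fun a a' e => add_smul a a' e)
    (fun r a e => smul_assoc r a e)
    (fun a e e' => smul_add a e e')
    (fun r a e => smul_comm a r e)

/-- Complex-bilinear extension of the pairing. -/
noncomputable def pairC (C : CourantAlgebroid A E) :
    ℂ ⊗[ℝ] E →ₗ[ℂ] ℂ ⊗[ℝ] E →ₗ[ℂ] ℂ ⊗[ℝ] A := bcBilin C.pairR

/-- Complex-bilinear extension of the Dorfman bracket. -/
noncomputable def bracC (C : CourantAlgebroid A E) :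
    ℂ ⊗[ℝ] E →ₗ[ℂ] ℂ ⊗[ℝ] E →ₗ[ℂ] ℂ ⊗[ℝ] E := bcBilin C.brac

/-- Complex-bilinear extension of the anchor. -/
noncomputable def rhoC (C : CourantAlgebroid A E) :
    ℂ ⊗[ℝ] E →ₗ[ℂ] ℂ ⊗[ℝ] A →ₗ[ℂ] ℂ ⊗[ℝ] A := bcBilin C.rhoR

/-- Complex-bilinear extension of the `A`-action on `E`. -/
noncomputable def smulC (C : CourantAlgebroid A E) :
    ℂ ⊗[ℝ] A →ₗ[ℂ] ℂ ⊗[ℝ] E →ₗ[ℂ] ℂ ⊗[ℝ] E := bcBilin (smulR A E)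

/-- The `ℂ`-linear extension of an `A`-linear endomorphism of `E` to `ℂ ⊗[ℝ] E`. -/
noncomputable def cext (F : E →ₗ[A] E) : ℂ ⊗[ℝ] E →ₗ[ℂ] ℂ ⊗[ℝ] E :=
  (F.restrictScalars ℝ).baseChange ℂ

/-- `Ω^♯ = (1/2)(I + iK)` associated with an (almost) hypercomplex triple. -/
noncomputable def OmS (I K : E →ₗ[A] E) : ℂ ⊗[ℝ] E →ₗ[ℂ] ℂ ⊗[ℝ] E :=
  (1/2 : ℂ) • (cext I + Complex.I • cext K)

/-- `Ω̄^♯ = (1/2)(I - iK)` associated with an (almost) hypercomplex triple. -/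
noncomputable def ObS (I K : E →ₗ[A] E) : ℂ ⊗[ℝ] E →ₗ[ℂ] ℂ ⊗[ℝ] E :=
  (1/2 : ℂ) • (cext I - Complex.I • cext K)

/-- `Ω(ξ,η) = ⟨Ω^♯ξ, η⟩`. -/
noncomputable def Omf (C : CourantAlgebroid A E) (I K : E →ₗ[A] E)
    (x y : ℂ ⊗[ℝ] E) : ℂ ⊗[ℝ] A :=
  C.pairC (OmS I K x) y

/-- The complexified hypercomplex connection on `ℂ ⊗[ℝ] E`. -/
noncomputable def hconnC (C : CourantAlgebroid A E) (I J K : E →ₗ[A] E)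
    (U V : ℂ ⊗[ℝ] E) : ℂ ⊗[ℝ] E :=
  -((1/2 : ℂ) • cext K (C.bracC (cext J V) (cext I U) - cext J (C.bracC V (cext I U))
      - cext I (C.bracC (cext J V) U) + cext J (cext I (C.bracC V U))))

end CourantAlgebroid

/-!
Everything happens in the complexification, where the claims are linear algebra. If
`Jξ = -iξ`, the defining formula collapses to `∇_X ξ = -½ K (J w + i w)` with
`w = I(ξ∘X) - ξ∘(IX)`; the vector `J w + i w` lies in `L_J`, and `K` anticommutes with `J`, so
`∇_X ξ ∈ L*_J`. For `Y ∈ L_J` one has `KY = i IY`, and skewness of `J` and `K` gives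
`⟨∇_X ξ, Y⟩ = -⟨w, IY⟩ = -⟨ξ∘X, Y⟩`: the term `⟨ξ∘(IX), IY⟩` vanishes because `L*_J` is
isotropic and, `J` being integrable, closed under the bracket. The Courant axioms reduce the
right-hand side to the same `-⟨ξ∘X, Y⟩`. The second claim is the first with `i` and `-i`
exchanged.
-/

section Quaternion

variable {R S : Type*} [Ring R] [Ring S]

structure IsQuaternionTriple (i j k : R) : Prop where
  mul_self_i : i * i = -1
  mul_self_j : j * j = -1
  mul_self_k : k * k = -1
  mul_mul : i * j * k = -1

namespace IsQuaternionTriple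

variable {i j k : R}

theorem i_mul_j (h : IsQuaternionTriple i j k) : i * j = k := by
  calc i * j = -(i * j * k) * k := by rw [neg_mul, mul_assoc (i * j), h.mul_self_k]; noncomm_ring
    _ = k := by rw [h.mul_mul, neg_neg, one_mul]

theorem j_mul_k (h : IsQuaternionTriple i j k) : j * k = i := by
  calc j * k = -(i * (i * j * k)) := by rw [← mul_assoc, ← mul_assoc, h.mul_self_i]; noncomm_ring
    _ = i := by rw [h.mul_mul, mul_neg_one, neg_neg]

theorem j_mul_i (h : IsQuaternionTriple i j k) : j * i = -k := by
  rw [← h.j_mul_k, ← mul_assoc, h.mul_self_j, neg_one_mul]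

theorem k_mul_j (h : IsQuaternionTriple i j k) : k * j = -i := by
  rw [← h.i_mul_j, mul_assoc, h.mul_self_j, mul_neg_one]

theorem map (h : IsQuaternionTriple i j k) (f : R →+* S) :
    IsQuaternionTriple (f i) (f j) (f k) where
  mul_self_i := by rw [← map_mul, h.mul_self_i, map_neg, map_one]
  mul_self_j := by rw [← map_mul, h.mul_self_j, map_neg, map_one]
  mul_self_k := by rw [← map_mul, h.mul_self_k, map_neg, map_one]
  mul_mul := by rw [← map_mul, ← map_mul, h.mul_mul, map_neg, map_one]

end IsQuaternionTriple

end Quaternion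

section EigenspaceAlgebra

open Module End

variable {R V W : Type*} [CommRing R] [AddCommGroup V] [Module R V]

theorem apply_mem_eigenspace_neg_of_anticomm {S T : End R V} (hST : T * S = -(S * T)) {c : R}
    {v : V} (hv : v ∈ T.eigenspace c) : S v ∈ T.eigenspace (-c) := by
  rw [mem_eigenspace_iff] at hv ⊢
  rw [← Module.End.mul_apply, hST, LinearMap.neg_apply, Module.End.mul_apply, hv, map_smul,
    neg_smul]

theorem add_smul_mem_eigenspace {T : End R V} (hT : T * T = -1) {c : R} (hc : c * c = -1)
    (w : V) : T w + c • w ∈ T.eigenspace c := by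
  have hTT : T (T w) = -w := by rw [← Module.End.mul_apply, hT]; simp
  rw [mem_eigenspace_iff, map_add, map_smul, hTT, smul_add, smul_smul, hc]
  module

variable {𝕜 : Type*} [Field 𝕜] [Module 𝕜 V] [AddCommGroup W] [Module 𝕜 W]

theorem LinearMap.IsSkewAdjoint.eq_zero_of_mem_eigenspace [CharZero 𝕜]
    {P : V →ₗ[𝕜] V →ₗ[𝕜] W} {T : End 𝕜 V} (hT : P.IsSkewAdjoint T) {c : 𝕜} (hc : c ≠ 0) {u v : V}
    (hu : u ∈ T.eigenspace c) (hv : v ∈ T.eigenspace c) : P u v = 0 := by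
  rw [mem_eigenspace_iff] at hu hv
  have h := hT u v
  rw [hu, Pi.neg_apply, hv] at h
  simp only [map_smul, map_neg, LinearMap.smul_apply] at h
  have h2 : (2 * c) • P u v = 0 := by linear_combination (norm := module) h
  exact (smul_eq_zero.mp h2).resolve_left (mul_ne_zero two_ne_zero hc)

theorem apply_mem_eigenspace_of_nijenhuis [CharZero 𝕜] {B : V →ₗ[𝕜] V →ₗ[𝕜] V} {J : End 𝕜 V}
    (hN : ∀ u v, B (J u) (J v) - J (B u (J v)) - J (B (J u) v) - B u v = 0) {c : 𝕜}
    (hc : c * c = -1) {u v : V} (hu : u ∈ J.eigenspace c) (hv : v ∈ J.eigenspace c) :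
    B u v ∈ J.eigenspace c := by
  rw [mem_eigenspace_iff] at hu hv ⊢
  have h := hN u v
  rw [hu, hv] at h
  simp only [map_smul, LinearMap.smul_apply, smul_smul, hc] at h
  linear_combination (norm := module) (c / 2) • h + hc • J (B u v)

end EigenspaceAlgebra

section Connection

open Module End

variable {𝕜 M W : Type*} [Field 𝕜] [AddCommGroup M] [Module 𝕜 M]
  [AddCommGroup W] [Module 𝕜 W]

def hypercomplexConn (B : M →ₗ[𝕜] M →ₗ[𝕜] M) (I J K : End 𝕜 M) (U V : M) : M :=
  -((1 / 2 : 𝕜) • K (B (J V) (I U) - J (B V (I U)) - I (B (J V) U) + J (I (B V U))))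

variable {B : M →ₗ[𝕜] M →ₗ[𝕜] M} {I J K : End 𝕜 M} {c : 𝕜} {U V : M}

theorem hypercomplexConn_eq_of_mem_eigenspace (hV : V ∈ J.eigenspace (-c)) :
    hypercomplexConn B I J K U V =
      -((1 / 2 : 𝕜) • K (J (I (B V U) - B V (I U)) + c • (I (B V U) - B V (I U)))) := by
  rw [mem_eigenspace_iff] at hV
  simp only [hypercomplexConn, hV, neg_smul, map_neg, map_smul, LinearMap.neg_apply,
    LinearMap.smul_apply, map_sub]
  congr 3
  module

theorem hypercomplexConn_mem_eigenspace (hq : IsQuaternionTriple I J K) (hc : c * c = -1)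
    (hV : V ∈ J.eigenspace (-c)) : hypercomplexConn B I J K U V ∈ J.eigenspace (-c) := by
  rw [hypercomplexConn_eq_of_mem_eigenspace hV]
  refine Submodule.neg_mem _ (Submodule.smul_mem _ _ ?_)
  refine apply_mem_eigenspace_neg_of_anticomm ?_ (add_smul_mem_eigenspace hq.mul_self_j hc _)
  rw [hq.j_mul_k, hq.k_mul_j, neg_neg]

theorem pair_hypercomplexConn [CharZero 𝕜] {P : M →ₗ[𝕜] M →ₗ[𝕜] W}
    (hq : IsQuaternionTriple I J K) (hI : P.IsSkewAdjoint I) (hJ : P.IsSkewAdjoint J)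
    (hK : P.IsSkewAdjoint K)
    (hN : ∀ u v, B (J u) (J v) - J (B u (J v)) - J (B (J u) v) - B u v = 0)
    (hc : c * c = -1) {Y : M} (hU : U ∈ J.eigenspace c) (hY : Y ∈ J.eigenspace c)
    (hV : V ∈ J.eigenspace (-c)) :
    P (hypercomplexConn B I J K U V) Y = -P (B V U) Y := by
  have hIJ : J * I = -(I * J) := by rw [hq.j_mul_i, hq.i_mul_j]
  have hc₀ : -c ≠ 0 := by rintro h; simp [neg_eq_zero.mp h] at hc
  have hIY := apply_mem_eigenspace_neg_of_anticomm hIJ hY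
  have hBV : B V (I U) ∈ J.eigenspace (-c) := apply_mem_eigenspace_of_nijenhuis hN
    (by rw [neg_mul_neg, hc]) hV (apply_mem_eigenspace_neg_of_anticomm hIJ hU)
  have hKY : K Y = c • I Y := by
    rw [← hq.i_mul_j, Module.End.mul_apply, mem_eigenspace_iff.mp hY, map_smul]
  have hJKY : J (K Y) = I Y := by rw [← Module.End.mul_apply, hq.j_mul_k]
  have hII : ∀ a b, P (I a) (I b) = P a b := fun a b => by
    rw [hI, Pi.neg_apply, ← Module.End.mul_apply, hq.mul_self_i]; simp
  set w := I (B V U) - B V (I U)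
  have hw : P w (I Y) = P (B V U) Y := by
    simp [w, hII, hJ.eq_zero_of_mem_eigenspace hc₀ hBV hIY]
  rw [hypercomplexConn_eq_of_mem_eigenspace hV, map_neg, map_smul, LinearMap.neg_apply,
    LinearMap.smul_apply, hK, Pi.neg_apply, map_neg, map_add, map_smul, LinearMap.add_apply,
    LinearMap.smul_apply, hJ, Pi.neg_apply, hJKY, map_neg, hKY, map_smul, hw]
  linear_combination (norm := module) ((1 / 2 : 𝕜) • hc • P (B V U) Y)

end Connection

theorem bcBilin_tmul {M N P : Type} [AddCommGroup M] [Module ℝ M] [AddCommGroup N]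
    [Module ℝ N] [AddCommGroup P] [Module ℝ P] (B : M →ₗ[ℝ] N →ₗ[ℝ] P) (a b : ℂ) (x : M)
    (y : N) : bcBilin B (a ⊗ₜ x) (b ⊗ₜ y) = (a * b) ⊗ₜ B x y := by
  simp [bcBilin, TensorProduct.smul_tmul', smul_eq_mul]

namespace CourantAlgebroid

open TensorProduct

variable {A E : Type} [CommRing A] [Algebra ℝ A]
    [AddCommGroup E] [Module ℝ E] [Module A E] [IsScalarTower ℝ A E] (C : CourantAlgebroid A E)

@[simp] theorem pairR_apply (x y : E) : C.pairR x y = C.pair x y := rfl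

@[simp] theorem rhoR_apply (x : E) (f : A) : C.rhoR x f = C.anchor x f := rfl

theorem cext_tmul (F : E →ₗ[A] E) (a : ℂ) (x : E) : cext F (a ⊗ₜ x) = a ⊗ₜ F x := rfl

noncomputable def cextRingHom : Module.End A E →+* Module.End ℂ (ℂ ⊗[ℝ] E) where
  toFun := cext
  map_one' := LinearMap.baseChange_one ℝ E
  map_mul' F G := LinearMap.baseChange_mul (F.restrictScalars ℝ) (G.restrictScalars ℝ)
  map_zero' := LinearMap.baseChange_zero
  map_add' F G := LinearMap.baseChange_add (F.restrictScalars ℝ) (G.restrictScalars ℝ)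

theorem nij_self_eq {J : E →ₗ[A] E} (hJ : ∀ e, J (J e) = -e) (U V : E) :
    C.nij J J U V =
      (2 : ℝ) • (C.brac (J U) (J V) - J (C.brac U (J V)) - J (C.brac (J U) V) - C.brac U V) := by
  simp only [nij, nijGen, hJ]
  module

theorem anchor_pair_eq_pair_brac_add_brac (x y z : E) :
    C.anchor z (C.pair x y) = C.pair (C.brac x y + C.brac y x) z := by
  rw [← C.pairR_apply (C.brac x y + _), C.brac_add_swap, map_smul, LinearMap.smul_apply,
    pairR_apply, C.pair_Dm, smul_smul]
  norm_num

theorem anchor_pair_sub_anchor_pair_sub_pair_brac (u v w : E) :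
    C.anchor u (C.pair w v) - C.anchor v (C.pair w u) - C.pair w (C.brac u v) =
      -C.pair (C.brac w u) v := by
  rw [C.anchor_pair, anchor_pair_eq_pair_brac_add_brac, map_add, LinearMap.add_apply]
  abel

theorem rhoC_sub_rhoC_sub_pairC_bracC (u v w : ℂ ⊗[ℝ] E) :
    C.rhoC u (C.pairC w v) - C.rhoC v (C.pairC w u) - C.pairC w (C.bracC u v) =
      -C.pairC (C.bracC w u) v := by
  induction u using TensorProduct.induction_on with
  | zero => simp
  | add u₁ u₂ h₁ h₂ =>
    simp only [map_add, LinearMap.add_apply]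
    linear_combination (norm := module) h₁ + h₂
  | tmul a x =>
  induction v using TensorProduct.induction_on with
  | zero => simp
  | add v₁ v₂ h₁ h₂ =>
    simp only [map_add, LinearMap.add_apply]
    linear_combination (norm := module) h₁ + h₂
  | tmul b y =>
  induction w using TensorProduct.induction_on with
  | zero => simp
  | add w₁ w₂ h₁ h₂ =>
    simp only [map_add, LinearMap.add_apply]
    linear_combination (norm := module) h₁ + h₂
  | tmul c z =>
    simp only [rhoC, pairC, bracC, bcBilin_tmul, rhoR_apply, pairR_apply]
    rw [show a * (c * b) = a * b * c by ring, show b * (c * a) = a * b * c by ring,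
      show c * (a * b) = a * b * c by ring, show c * a * b = a * b * c by ring, ← tmul_sub,
      ← tmul_sub, ← tmul_neg, anchor_pair_sub_anchor_pair_sub_pair_brac]

open Module End

variable {C} {I J K : E →ₗ[A] E}

theorem IsAlmostComplexStr.isSkewAdjoint {F : E →ₗ[A] E} (hF : C.IsAlmostComplexStr F) :
    C.pair.IsSkewAdjoint F := by
  intro x y
  have h := hF.2 x (F y)
  rw [hF.1 y, map_neg] at h
  rw [Pi.neg_apply, map_neg, ← h, neg_neg]

theorem IsAlmostHypercomplex.isQuaternionTriple (h : C.IsAlmostHypercomplex I J K) :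
    IsQuaternionTriple I J K where
  mul_self_i := LinearMap.ext h.1.1
  mul_self_j := LinearMap.ext h.2.1.1
  mul_self_k := LinearMap.ext h.2.2.1.1
  mul_mul := LinearMap.ext h.2.2.2

theorem isSkewAdjoint_pairC_cext {F : E →ₗ[A] E} (hF : C.pair.IsSkewAdjoint F) :
    C.pairC.IsSkewAdjoint (cext F) := by
  have h : C.pairC ∘ₗ cext F = -C.pairC.compl₂ (cext F) := by
    ext x y
    simp [pairC, bcBilin, cext, hF x y, tmul_neg]
  intro u v
  simpa using LinearMap.congr_fun₂ h u v

theorem IsComplexStr.complexified_nijenhuis_eq_zero {J : E →ₗ[A] E} (hJ : C.IsComplexStr J)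
    (u v : ℂ ⊗[ℝ] E) :
    C.bracC (cext J u) (cext J v) - cext J (C.bracC u (cext J v))
      - cext J (C.bracC (cext J u) v) - C.bracC u v = 0 := by
  have hN : ∀ U V,
      C.brac (J U) (J V) - J (C.brac U (J V)) - J (C.brac (J U) V) - C.brac U V = 0 := by
    intro U V
    have h := hJ.2 U V
    rwa [C.nij_self_eq hJ.1.1, smul_eq_zero, or_iff_right two_ne_zero] at h
  have : C.bracC.compl₁₂ (cext J) (cext J) - (C.bracC.compl₂ (cext J)).compr₂ (cext J)
      - (C.bracC ∘ₗ cext J).compr₂ (cext J) - C.bracC = 0 := by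
    ext x y
    simp [bracC, bcBilin_tmul, cext_tmul, ← tmul_sub, hN]
  simpa using LinearMap.congr_fun₂ this u v

theorem IsHypercomplex.hconnC_mem_eigenspace (h : C.IsHypercomplex I J K) {c : ℂ}
    (hc : c * c = -1) {U V : ℂ ⊗[ℝ] E} (hV : V ∈ eigenspace (cext J) (-c)) :
    C.hconnC I J K U V ∈ eigenspace (cext J) (-c) :=
  -- `hconnC` is `hypercomplexConn` of the complexified bracket and structures, by definition
  hypercomplexConn_mem_eigenspace (h.1.isQuaternionTriple.map cextRingHom) hc hV

theorem IsHypercomplex.pairC_hconnC (h : C.IsHypercomplex I J K) {c : ℂ}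
    (hc : c * c = -1) {U V Y : ℂ ⊗[ℝ] E} (hU : U ∈ eigenspace (cext J) c)
    (hY : Y ∈ eigenspace (cext J) c) (hV : V ∈ eigenspace (cext J) (-c)) :
    C.pairC (C.hconnC I J K U V) Y =
      C.rhoC U (C.pairC V Y) - C.rhoC Y (C.pairC V U) - C.pairC V (C.bracC U Y) := by
  rw [rhoC_sub_rhoC_sub_pairC_bracC]
  exact pair_hypercomplexConn (h.1.isQuaternionTriple.map cextRingHom)
    (isSkewAdjoint_pairC_cext h.1.1.isSkewAdjoint)
    (isSkewAdjoint_pairC_cext h.1.2.1.isSkewAdjoint)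
    (isSkewAdjoint_pairC_cext h.1.2.2.1.isSkewAdjoint)
    (IsComplexStr.complexified_nijenhuis_eq_zero ⟨h.1.2.1, h.2.2.2.2.1⟩) hc hU hY hV

end CourantAlgebroid

open Module End

theorem mem_eigP_iff {M : Type} [AddCommGroup M] [Module ℝ M] {T : ℂ ⊗[ℝ] M →ₗ[ℂ] ℂ ⊗[ℝ] M}
    {e : ℂ ⊗[ℝ] M} : e ∈ eigP T ↔ e ∈ eigenspace T Complex.I :=
  Module.End.mem_eigenspace_iff.symm

theorem mem_eigM_iff {M : Type} [AddCommGroup M] [Module ℝ M] {T : ℂ ⊗[ℝ] M →ₗ[ℂ] ℂ ⊗[ℝ] M}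
    {e : ℂ ⊗[ℝ] M} : e ∈ eigM T ↔ e ∈ eigenspace T (-Complex.I) := by
  rw [Module.End.mem_eigenspace_iff, neg_smul]; rfl

open CourantAlgebroid

theorem stmt16 {A E : Type} [CommRing A] [Algebra ℝ A] [AddCommGroup E] [Module ℝ E]
    [Module A E] [IsScalarTower ℝ A E] (C : CourantAlgebroid A E) (I J K : E →ₗ[A] E)
    (h : C.IsHypercomplex I J K) :
    ∀ X Y ξ η : ℂ ⊗[ℝ] E, X ∈ eigP (cext J) → Y ∈ eigP (cext J) →
      ξ ∈ eigM (cext J) → η ∈ eigM (cext J) →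
      C.hconnC I J K X ξ ∈ eigM (cext (A := A) (E := E) J) ∧
      C.pairC (C.hconnC I J K X ξ) Y =
        C.rhoC X (C.pairC ξ Y) - C.rhoC Y (C.pairC ξ X) - C.pairC ξ (C.bracC X Y) ∧
      C.hconnC I J K ξ X ∈ eigP (cext (A := A) (E := E) J) ∧
      C.pairC (C.hconnC I J K ξ X) η =
        C.rhoC ξ (C.pairC X η) - C.rhoC η (C.pairC X ξ) - C.pairC X (C.bracC ξ η) := by
  intro X Y ξ η hX hY hξ hη
  rw [mem_eigP_iff] at hX hY ⊢
  rw [mem_eigM_iff] at hξ hη ⊢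
  have hc : Complex.I * Complex.I = -1 := Complex.I_mul_I
  have hc' : -Complex.I * -Complex.I = -1 := by rw [neg_mul_neg, hc]
  have hX' : X ∈ eigenspace (cext J) (- -Complex.I) := by rwa [neg_neg]
  refine ⟨h.hconnC_mem_eigenspace hc hξ, h.pairC_hconnC hc hX hY hξ, ?_,
    h.pairC_hconnC hc' hξ hη hX'⟩
  simpa only [neg_neg] using h.hconnC_mem_eigenspace (U := ξ) hc' hX'
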